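/- Let K be symmetric positive definite and G symmetric, both n×n. If K + G ⪰ 0 fails, i.e. there exists w ≠ 0 with wᵀ(K+G)w < 0, then there exist μ ∈ (0,1) and v ≠ 0 with K v = μ(−G)v. -/

import Mathlib

open Matrix

private lemma symm_dot {n : ℕ} {S : Matrix (Fin n) (Fin n) ℝ} (hS : Sᵀ = S)
    (u z : Fin n → ℝ) : u ⬝ᵥ (S *ᵥ z) = (S *ᵥ u) ⬝ᵥ z := by
  rw [dotProduct_mulVec, ← mulVec_transpose, hS]

private lemma sandwich {n : ℕ} (S C : Matrix (Fin n) (Fin n) ℝ) (hS : Sᵀ = S)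
    (w : Fin n → ℝ) :
    (S *ᵥ w) ⬝ᵥ (C *ᵥ (S *ᵥ w)) = w ⬝ᵥ ((S * C * S) *ᵥ w) := by
  calc (S *ᵥ w) ⬝ᵥ (C *ᵥ (S *ᵥ w)) = ((C * S) *ᵥ w) ⬝ᵥ (S *ᵥ w) := by
        rw [mulVec_mulVec, dotProduct_comm]
    _ = (S *ᵥ ((C * S) *ᵥ w)) ⬝ᵥ w := symm_dot hS _ _
    _ = ((S * C * S) *ᵥ w) ⬝ᵥ w := by rw [mulVec_mulVec, ← Matrix.mul_assoc]
    _ = w ⬝ᵥ ((S * C * S) *ᵥ w) := dotProduct_comm _ _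

/-- for `K ≻ 0` symmetric and `G` symmetric, `K + G ⪰ 0` fails iff
there is `w ≠ 0` with `wᵀ(K+G)w < 0`; moreover failure of `K + G ⪰ 0` implies the
existence of a generalized eigenvalue `μ ∈ (0,1)` and `v ≠ 0` with `K v = μ (−G) v`. -/
theorem buckling_psd_characterization {n : ℕ} (K G : Matrix (Fin n) (Fin n) ℝ)
    (hK : K.PosDef) (hG : G.IsSymm) :
    (¬ (K + G).PosSemidef ↔ ∃ w : Fin n → ℝ, w ≠ 0 ∧ w ⬝ᵥ ((K + G) *ᵥ w) < 0) ∧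
      (¬ (K + G).PosSemidef →
        ∃ μ ∈ Set.Ioo (0 : ℝ) 1, ∃ v : Fin n → ℝ, v ≠ 0 ∧ K *ᵥ v = μ • ((-G) *ᵥ v)) := by
  have hKG : (K + G).IsHermitian := by
    have hGh : G.IsHermitian := by
      rw [Matrix.IsHermitian, conjTranspose_eq_transpose_of_trivial]; exact hG
    exact hK.isHermitian.add hGh
  have hiff : ¬ (K + G).PosSemidef ↔ ∃ w : Fin n → ℝ, w ≠ 0 ∧ w ⬝ᵥ ((K + G) *ᵥ w) < 0 := by
    constructor
    · intro h
      rw [Matrix.posSemidef_iff_dotProduct_mulVec] at h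
      push_neg at h
      obtain ⟨x, hx⟩ := h hKG
      rw [star_trivial] at hx
      refine ⟨x, ?_, hx⟩
      rintro rfl
      simp at hx
    · rintro ⟨w, hw, hlt⟩ h
      have := h.dotProduct_mulVec_nonneg w
      rw [star_trivial] at this
      linarith
  refine ⟨hiff, fun h => ?_⟩
  obtain ⟨w, hw0, hwlt⟩ := hiff.mp h
  classical
  obtain ⟨S, hSt, hSS, hdet⟩ :
      ∃ S : Matrix (Fin n) (Fin n) ℝ, Sᵀ = S ∧ S * S = K ∧ IsUnit S.det := by
    open scoped MatrixOrder in
    refine ⟨CFC.sqrt K, ?_, CFC.sqrt_mul_sqrt_self K hK.posSemidef.nonneg, ?_⟩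
    · open scoped MatrixOrder in
      have := (Matrix.nonneg_iff_posSemidef.mp (CFC.sqrt_nonneg K)).1
      rwa [Matrix.IsHermitian, conjTranspose_eq_transpose_of_trivial] at this
    · have hKdet : K.det ≠ 0 := ne_of_gt hK.det_pos
      open scoped MatrixOrder in
      have hm : (CFC.sqrt K).det * (CFC.sqrt K).det = K.det := by
        rw [← det_mul, CFC.sqrt_mul_sqrt_self K hK.posSemidef.nonneg]
      refine isUnit_iff_ne_zero.mpr (fun h0 => hKdet ?_)
      rw [← hm, h0, mul_zero]
  have hSinv : S⁻¹ * S = 1 := nonsing_inv_mul S hdet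
  have hSinv' : S * S⁻¹ = 1 := mul_nonsing_inv S hdet
  have hSit : S⁻¹ᵀ = S⁻¹ := by rw [transpose_nonsing_inv, hSt]
  set B := -G with hBdef
  have hBt : Bᵀ = B := by rw [hBdef, transpose_neg, hG.eq]
  set M := S⁻¹ * B * S⁻¹ with hMdef
  have hMt : Mᵀ = M := by
    rw [hMdef, Matrix.transpose_mul, Matrix.transpose_mul, hSit, hBt, Matrix.mul_assoc]
  set A := (1 : Matrix (Fin n) (Fin n) ℝ) - M with hAdef
  have hAh : A.IsHermitian := by
    rw [Matrix.IsHermitian, conjTranspose_eq_transpose_of_trivial, hAdef, transpose_sub,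
      transpose_one, hMt]
  set x := S *ᵥ w with hxdef
  have hxA : x ⬝ᵥ (A *ᵥ x) < 0 := by
    have h1 : x ⬝ᵥ (A *ᵥ x) = w ⬝ᵥ ((S * A * S) *ᵥ w) := sandwich S A hSt w
    have h2 : S * A * S = K - B := by
      rw [hAdef, Matrix.mul_sub, Matrix.sub_mul, Matrix.mul_one, hSS, hMdef]
      congr 1
      calc S * (S⁻¹ * B * S⁻¹) * S = (S * S⁻¹) * B * (S⁻¹ * S) := by
            simp only [Matrix.mul_assoc]
          _ = B := by rw [hSinv, hSinv', Matrix.one_mul, Matrix.mul_one]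
    have h3 : w ⬝ᵥ ((K - B) *ᵥ w) = w ⬝ᵥ ((K + G) *ᵥ w) := by
      rw [hBdef, sub_neg_eq_add]
    rw [h1, h2, h3]; exact hwlt
  have hnA : ¬ ∀ i, 0 ≤ hAh.eigenvalues i := by
    intro hall
    have := (hAh.posSemidef_iff_eigenvalues_nonneg.mpr hall).dotProduct_mulVec_nonneg x
    rw [star_trivial] at this
    linarith
  push_neg at hnA
  obtain ⟨i, hti⟩ := hnA
  set t := hAh.eigenvalues i with htdef
  set u : Fin n → ℝ := ⇑(hAh.eigenvectorBasis i) with hudef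
  have hu0 : u ≠ 0 := by
    have hne := hAh.eigenvectorBasis.orthonormal.ne_zero i
    intro h0
    exact hne (by ext j; exact congrFun h0 j)
  have hAu : A *ᵥ u = t • u := hAh.mulVec_eigenvectorBasis i
  have hMu : M *ᵥ u = (1 - t) • u := by
    have hMeq : M *ᵥ u = u - A *ᵥ u := by
      rw [hAdef, sub_mulVec, one_mulVec]; abel
    rw [hMeq, hAu]
    ext j
    simp only [Pi.sub_apply, Pi.smul_apply, smul_eq_mul]
    ring
  have hν : (1 : ℝ) < 1 - t := by linarith
  set v := S⁻¹ *ᵥ u with hvdef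
  have hv0 : v ≠ 0 := by
    intro h0
    apply hu0
    have hSv : S *ᵥ v = u := by
      rw [hvdef, mulVec_mulVec, hSinv', one_mulVec]
    rw [← hSv, h0, mulVec_zero]
  have hKv : K *ᵥ v = S *ᵥ u := by
    rw [hvdef, mulVec_mulVec, ← hSS, Matrix.mul_assoc, hSinv', Matrix.mul_one]
  have hBv : B *ᵥ v = (1 - t) • (S *ᵥ u) := by
    have hm : S * M = B * S⁻¹ := by
      rw [hMdef, ← Matrix.mul_assoc, ← Matrix.mul_assoc, hSinv', Matrix.one_mul]
    have h1 : S *ᵥ (M *ᵥ u) = B *ᵥ v := by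
      rw [hvdef, mulVec_mulVec, mulVec_mulVec, hm]
    rw [← h1, hMu, mulVec_smul]
  refine ⟨(1 - t)⁻¹, ⟨inv_pos.mpr (by linarith), inv_lt_one_of_one_lt₀ hν⟩, v, hv0, ?_⟩
  rw [hBv, hKv, smul_smul, inv_mul_cancel₀ (by linarith), one_smul]
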